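/- arXiv:2603.29961 — 6 statements merged into one kernel-verified Lean document; each statement's English description precedes it below -/
import Mathlib

section
/- For K ≥ 2, define M_K = Π_{p ≤ K} p^(⌊log_p K⌋ + 1) (product over primes p ≤ K). Then for every 0 ≤ k ≤ K, every prime p ≤ K, and every integer a ≥ 1, we have (M_K − 1) mod p^a ≥ k mod p^a. -/
/-!
Every prime power `p ^ (⌊log_p K⌋ + 1)` with `p ≤ K` divides `M`, hence so does every smaller power
of `p`, and `M - 1 ≡ -1` modulo all of them. For `p ^ a` dividing `M` the residue of `M - 1` is the
largest possible one, `p ^ a - 1`. For larger `a` the residue of `M - 1` modulo `p ^ a` still reduces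
to `p ^ (⌊log_p K⌋ + 1) - 1 ≥ K` modulo the smaller power, so it is at least `K ≥ k ≥ k % p ^ a`.
-/

theorem Nat.sub_one_mod_of_dvd {M n : ℕ} (hM : 0 < M) (h : n ∣ M) : (M - 1) % n = n - 1 := by
  have hn : 0 < n := Nat.pos_of_dvd_of_pos h hM
  have hcongr : M - 1 ≡ n - 1 [MOD n] := by
    refine Nat.ModEq.add_right_cancel' 1 ?_
    rw [Nat.sub_add_cancel hM, Nat.sub_add_cancel hn]
    exact (Nat.modEq_zero_iff_dvd.mpr h).trans (Nat.modEq_zero_iff_dvd.mpr dvd_rfl).symm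
  rw [hcongr, Nat.mod_eq_of_lt (Nat.sub_lt hn one_pos)]

theorem Nat.mod_le_sub_one_mod_of_dvd {M n : ℕ} (hM : 0 < M) (h : n ∣ M) (k : ℕ) :
    k % n ≤ (M - 1) % n := by
  rw [Nat.sub_one_mod_of_dvd hM h]
  exact Nat.le_sub_one_of_lt (Nat.mod_lt k (Nat.pos_of_dvd_of_pos h hM))

theorem Nat.le_sub_one_mod_of_dvd_of_dvd {M n d k : ℕ} (hM : 0 < M) (hdM : d ∣ M) (hdn : d ∣ n)
    (hk : k < d) : k ≤ (M - 1) % n :=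
  calc k ≤ d - 1 := Nat.le_sub_one_of_lt hk
    _ = (M - 1) % n % d := by rw [Nat.mod_mod_of_dvd _ hdn, Nat.sub_one_mod_of_dvd hM hdM]
    _ ≤ (M - 1) % n := Nat.mod_le _ _

theorem stmt_4_general (K : ℕ)
    (M : ℕ) (hM : M = ∏ p ∈ (Finset.range (K + 1)).filter Nat.Prime,
      p ^ (Nat.log p K + 1)) :
    ∀ k ≤ K, ∀ p : ℕ, p.Prime → p ≤ K → ∀ a : ℕ, 1 ≤ a →
      k % p ^ a ≤ (M - 1) % p ^ a := by
  intro k hk p hp hpK a _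
  set L := Nat.log p K + 1
  have hM_pos : 0 < M := hM ▸ Finset.prod_pos fun q hq ↦ pow_pos (Finset.mem_filter.mp hq).2.pos _
  have hpL_dvd : p ^ L ∣ M :=
    hM ▸ Finset.dvd_prod_of_mem _ (Finset.mem_filter.mpr ⟨Finset.mem_range_succ_iff.mpr hpK, hp⟩)
  rcases le_or_gt a L with haL | hLa
  · exact Nat.mod_le_sub_one_mod_of_dvd hM_pos ((pow_dvd_pow p haL).trans hpL_dvd) k
  · have hkL : k < p ^ L := hk.trans_lt (Nat.lt_pow_succ_log_self hp.one_lt K)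
    exact (Nat.mod_le k _).trans
      (Nat.le_sub_one_mod_of_dvd_of_dvd hM_pos hpL_dvd (pow_dvd_pow p hLa.le) hkL)

theorem stmt_4 (K : ℕ) (hK : 2 ≤ K)
    (M : ℕ) (hM : M = ∏ p ∈ (Finset.range (K + 1)).filter Nat.Prime,
      p ^ (Nat.log p K + 1)) :
    ∀ k ≤ K, ∀ p : ℕ, p.Prime → p ≤ K → ∀ a : ℕ, 1 ≤ a →
      k % p ^ a ≤ (M - 1) % p ^ a :=
  stmt_4_general K M hM
end

section
/- Define u(n,k) = Π_{p ≤ k} p^{v_p(C(n,k))} and f(n) = min{0 ≤ k ≤ n : u(n,k) > n²}. There is a sequence n_j → ∞ with f(n_j) ≥ (1/2 + o(1)) log n_j. -/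
noncomputable def u (n k : ℕ) : ℕ :=
  ∏ p ∈ (Finset.range (k + 1)).filter Nat.Prime,
    p ^ (n.choose k).factorization p

noncomputable def f (n : ℕ) : ℕ :=
  sInf {k : ℕ | k ≤ n ∧ n ^ 2 < u n k}

open Nat Finset

/-! ### Kummer: no carries -/

lemma erdos_pred_mod {q n : ℕ} (hq : 1 < q) (hd : q ∣ n + 1) : n % q = q - 1 := by
  obtain ⟨c, hc⟩ := hd
  have hc0 : c ≠ 0 := by rintro rfl; simp at hc
  obtain ⟨c', rfl⟩ : ∃ c', c = c' + 1 := ⟨c - 1, by omega⟩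
  have h1 : q * (c' + 1) = q * c' + q := by ring
  have h2 : n = q * c' + (q - 1) := by omega
  rw [h2, Nat.mul_add_mod, Nat.mod_eq_of_lt (by omega)]

lemma erdos_aux_mod {q n k : ℕ} (hq1 : 1 < q) (hkn : k ≤ n) (hkq : k % q ≤ n % q) :
    k % q + (n - k) % q < q := by
  have hdiv : k / q ≤ n / q := Nat.div_le_div_right hkn
  have e1 : q * (n / q) + n % q = n := Nat.div_add_mod n q
  have e2 : q * (k / q) + k % q = k := Nat.div_add_mod k q
  have e3 : q * (n / q - k / q) + q * (k / q) = q * (n / q) := by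
    rw [← Nat.mul_add]; congr 1; omega
  have hnk : n - k = q * (n / q - k / q) + (n % q - k % q) := by omega
  have hnq : n % q < q := Nat.mod_lt n (by omega)
  have hmod : (n - k) % q = n % q - k % q := by
    rw [hnk, Nat.mul_add_mod, Nat.mod_eq_of_lt (by omega)]
  omega

lemma erdos_mod_le_mod {A q n k : ℕ} (hq1 : 1 < q) (hkn : k ≤ n) (hkA : k < A)
    (hAq : A ∣ q) (hd : A ∣ n + 1) : k % q ≤ n % q := by
  have h2 : A ∣ n % q + 1 := by
    have h3 : n + 1 = q * (n / q) + (n % q + 1) := by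
      have h4 := Nat.div_add_mod n q; omega
    exact (Nat.dvd_add_right ((hAq.trans (Dvd.intro (n / q) rfl)))).mp (h3 ▸ hd)
  have h3 : A ≤ n % q + 1 := Nat.le_of_dvd (by omega) h2
  have h4 : k % q = k := Nat.mod_eq_of_lt (lt_of_lt_of_le hkA (Nat.le_of_dvd (by omega) hAq))
  omega

lemma erdos_nocarry {p n k E : ℕ} (hp : p.Prime) (hkn : k ≤ n) (hkE : k < p ^ E)
    (hd : p ^ E ∣ n + 1) : (n.choose k).factorization p = 0 := by
  haveI : Fact p.Prime := ⟨hp⟩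
  rw [Nat.factorization_def _ hp, padicValNat_choose hkn (lt_add_one _)]
  rw [Finset.card_eq_zero, Finset.filter_eq_empty_iff]
  intro i hi
  simp only [Finset.mem_Ico] at hi
  have hq1 : 1 < p ^ i := Nat.one_lt_pow (by omega) hp.one_lt
  have hkq : k % p ^ i ≤ n % p ^ i := by
    rcases le_or_gt i E with hiE | hiE
    · have hdq : p ^ i ∣ n + 1 := dvd_trans (pow_dvd_pow p hiE) hd
      rw [erdos_pred_mod hq1 hdq]
      have := Nat.mod_lt k (show 0 < p ^ i by omega)
      omega
    · exact erdos_mod_le_mod hq1 hkn hkE (pow_dvd_pow p hiE.le) hd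
  exact not_le.mpr (erdos_aux_mod hq1 hkn hkq)

/-! ### The witness `k = n - 9` -/

lemma erdos_u_witness {n : ℕ} (hn : 2 ^ 20 ≤ n) : n ^ 2 < u n (n - 9) := by
  have h9 : 9 ≤ n := by omega
  have hn0 : 0 < n := by omega
  have hC : n.choose (n - 9) = n.choose 9 := Nat.choose_symm h9
  set C := n.choose (n - 9) with hCdef
  have hCpos : 0 < C := Nat.choose_pos (by omega)
  have hfull : (∏ p ∈ (range (n + 1)).filter Nat.Prime, p ^ C.factorization p) = C := by
    rw [Finset.prod_filter_of_ne (fun p _hp hne => ?_)]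
    · exact Nat.prod_pow_factorization_choose n (n - 9) (by omega)
    · by_contra hnp
      exact hne (by rw [Nat.factorization_eq_zero_of_not_prime _ hnp, pow_zero])
  have hsplit : (range (n + 1)).filter Nat.Prime =
      ((range (n - 9 + 1)).filter Nat.Prime) ∪ ((Ico (n - 9 + 1) (n + 1)).filter Nat.Prime) := by
    have huni : Ico 0 (n - 9 + 1) ∪ Ico (n - 9 + 1) (n + 1) = Ico 0 (n + 1) :=
      Finset.Ico_union_Ico_eq_Ico (by omega) (by omega)
    rw [range_eq_Ico, ← huni, Finset.filter_union, ← range_eq_Ico]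
  have hdisj : Disjoint ((range (n - 9 + 1)).filter Nat.Prime)
      ((Ico (n - 9 + 1) (n + 1)).filter Nat.Prime) := by
    refine Finset.disjoint_filter_filter ?_
    rw [range_eq_Ico]
    exact Finset.Ico_disjoint_Ico_consecutive _ _ _
  set B := ∏ p ∈ (Ico (n - 9 + 1) (n + 1)).filter Nat.Prime, p ^ C.factorization p with hB
  have hAB : u n (n - 9) * B = C := by
    rw [← hfull, hsplit, Finset.prod_union hdisj]
    rfl
  have hcard : ((Ico (n - 9 + 1) (n + 1)).filter Nat.Prime).card ≤ 5 := by
    have : ((Ico (n - 9 + 1) (n + 1)).filter Nat.Prime).card ≤ (range 5).card := by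
      apply Finset.card_le_card_of_injOn (fun p => (p - (n - 8)) / 2)
      · intro p hp
        simp only [Finset.mem_coe, Finset.coe_filter, Set.mem_setOf_eq, Finset.mem_filter, Finset.mem_Ico] at hp
        simp only [Finset.mem_coe, Finset.coe_range, Set.mem_Iio, Finset.mem_range]
        omega
      · intro p hp q hq hpq
        simp only [Finset.coe_filter, Set.mem_setOf_eq, Finset.mem_Ico] at hp hq
        have hop : p % 2 = 1 := by
          rcases hp.2.eq_two_or_odd with h | h
          · omega
          · exact h
        have hoq : q % 2 = 1 := by
          rcases hq.2.eq_two_or_odd with h | h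
          · omega
          · exact h
        simp only at hpq
        omega
    simpa using this
  have hBle : B ≤ n ^ 5 := by
    calc B ≤ n ^ ((Ico (n - 9 + 1) (n + 1)).filter Nat.Prime).card := by
          apply Finset.prod_le_pow_card
          intro p hp
          exact Nat.pow_factorization_choose_le hn0
      _ ≤ n ^ 5 := Nat.pow_le_pow_right hn0 hcard
  have hBpos : 0 < B := by
    apply Finset.prod_pos
    intro p hp
    exact pow_pos (Nat.Prime.pos (Finset.mem_filter.mp hp).2) _
  have hnum : n ^ 7 < C := by
    have hC' : n.choose (n - 9) = n.choose 9 := hC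
    show n ^ 7 < n.choose (n - 9)
    rw [hC']
    have hd : (n - 8) ^ 9 ≤ n.descFactorial 9 := by
      have := Nat.pow_sub_le_descFactorial n 9
      have h98 : n + 1 - 9 = n - 8 := by omega
      rwa [h98] at this
    have hdf : n.descFactorial 9 = 362880 * n.choose 9 := by
      rw [Nat.descFactorial_eq_factorial_mul_choose]; norm_num [Nat.factorial]
    set m := n - 8 with hm
    have hm8 : 2 ^ 19 ≤ m := by omega
    have hn2m : n ≤ 2 * m := by omega
    have h1 : n ^ 7 ≤ 128 * m ^ 7 := by
      calc n ^ 7 ≤ (2 * m) ^ 7 := Nat.pow_le_pow_left hn2m 7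
        _ = 128 * m ^ 7 := by ring
    have h2 : 46448640 * m ^ 7 < m ^ 9 := by
      have : m ^ 9 = m ^ 2 * m ^ 7 := by ring
      rw [this]
      have hp7 : 0 < m ^ 7 := Nat.pow_pos (by omega)
      have hmm : 46448640 < m ^ 2 := by nlinarith [hm8]
      exact (Nat.mul_lt_mul_right hp7).mpr hmm
    have h3 : 362880 * n ^ 7 < m ^ 9 := by
      calc 362880 * n ^ 7 ≤ 362880 * (128 * m ^ 7) := Nat.mul_le_mul_left _ h1
        _ = 46448640 * m ^ 7 := by ring
        _ < m ^ 9 := h2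
    have h4 : m ^ 9 ≤ 362880 * n.choose 9 := hdf ▸ hd
    have := lt_of_lt_of_le h3 h4
    exact Nat.lt_of_mul_lt_mul_left this
  have : n ^ 2 * B < u n (n - 9) * B := by
    calc n ^ 2 * B ≤ n ^ 2 * n ^ 5 := Nat.mul_le_mul_left _ hBle
      _ = n ^ 7 := by ring
      _ < C := hnum
      _ = u n (n - 9) * B := hAB.symm
  exact Nat.lt_of_mul_lt_mul_right this

/-! ### The modulus `M K` and the lower bound for `f` -/

noncomputable def M (K : ℕ) : ℕ :=
  ∏ p ∈ (Finset.range (K + 1)).filter Nat.Prime, p ^ (Nat.log p K + 1)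

lemma erdos_M_gt {K : ℕ} (hK : 2 ≤ K) : K < M K := by
  have h2 : 2 ∈ (Finset.range (K + 1)).filter Nat.Prime := by
    simp only [Finset.mem_filter, Finset.mem_range]
    exact ⟨by omega, Nat.prime_two⟩
  have hle : 2 ^ (Nat.log 2 K + 1) ≤ M K := by
    unfold M
    exact Finset.single_le_prod' (f := fun p => p ^ (Nat.log p K + 1))
      (fun p hp => Nat.one_le_pow _ _ (Nat.Prime.pos (Finset.mem_filter.mp hp).2)) h2
  exact lt_of_lt_of_le (Nat.lt_pow_succ_log_self one_lt_two K) hle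

lemma erdos_u_eq_one {K k : ℕ} (hK : 2 ≤ K) (hkK : k ≤ K) : u (M K - 1) k = 1 := by
  have hMK := erdos_M_gt hK
  have hn1 : M K - 1 + 1 = M K := by omega
  apply Finset.prod_eq_one
  intro p hp
  simp only [Finset.mem_filter, Finset.mem_range] at hp
  obtain ⟨hpk, hpprime⟩ := hp
  rw [erdos_nocarry hpprime (le_trans hkK (by omega)) (lt_of_le_of_lt hkK
    (Nat.lt_pow_succ_log_self hpprime.one_lt K)) ?_, pow_zero]
  rw [hn1]
  exact Finset.dvd_prod_of_mem _ (by
    simp only [Finset.mem_filter, Finset.mem_range]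
    exact ⟨by omega, hpprime⟩)

lemma erdos_f_lower {K : ℕ} (hK : 2 ^ 20 ≤ K) : K + 1 ≤ f (M K - 1) := by
  have hK2 : 2 ≤ K := by omega
  have hMK := erdos_M_gt hK2
  set n := M K - 1 with hn
  have hnK : K ≤ n := by omega
  have hn20 : 2 ^ 20 ≤ n := le_trans hK hnK
  have hmem : n - 9 ∈ {k : ℕ | k ≤ n ∧ n ^ 2 < u n k} := ⟨by omega, erdos_u_witness hn20⟩
  have hfmem : f n ∈ {k : ℕ | k ≤ n ∧ n ^ 2 < u n k} := Nat.sInf_mem ⟨_, hmem⟩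
  by_contra hcon
  push_neg at hcon
  have hfK : f n ≤ K := by omega
  have h1 := erdos_u_eq_one hK2 hfK
  rw [← hn] at h1
  obtain ⟨-, h2⟩ := hfmem
  rw [h1] at h2
  nlinarith [hn20]

/-! ### Chebyshev's ψ and its liminf bound -/

noncomputable def psi (m : ℕ) : ℝ :=
  ∑ p ∈ (Finset.range (m + 1)).filter Nat.Prime, (Nat.log p m : ℝ) * Real.log p

lemma erdos_psi_nonneg (m : ℕ) : 0 ≤ psi m := by
  apply Finset.sum_nonneg
  intro p hp
  simp only [Finset.mem_filter] at hp
  exact mul_nonneg (by positivity) (Real.log_nonneg (by exact_mod_cast hp.2.one_lt.le))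

lemma erdos_psi_extend {m N : ℕ} (h : m ≤ N) :
    psi m = ∑ p ∈ (Finset.range (N + 1)).filter Nat.Prime,
      (Nat.log p m : ℝ) * Real.log p := by
  apply Finset.sum_subset (Finset.filter_subset_filter _ (Finset.range_subset_range.mpr (by omega)))
  intro p hp hnp
  simp only [Finset.mem_filter, Finset.mem_range] at hp hnp
  have hpm : m < p := by
    by_contra hc
    exact hnp ⟨by omega, hp.2⟩
  rw [Nat.log_eq_zero_iff.mpr (Or.inl hpm)]
  simp

lemma erdos_count_swap {p : ℕ} (hp : 1 < p) (N : ℕ) :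
    ∑ i ∈ Icc 1 (Nat.log p N), N / p ^ i = ∑ n ∈ Icc 1 N, Nat.log p (N / n) := by
  have step1 : ∀ i ∈ Icc 1 (Nat.log p N),
      N / p ^ i = ∑ n ∈ Icc 1 N, if n * p ^ i ≤ N then 1 else 0 := by
    intro i _
    have hpi : 0 < p ^ i := pow_pos (by omega) i
    rw [← Finset.card_filter]
    have : (Icc 1 N).filter (fun n => n * p ^ i ≤ N) = Icc 1 (N / p ^ i) := by
      ext x
      simp only [Finset.mem_filter, Finset.mem_Icc]
      constructor
      · rintro ⟨⟨h1, _⟩, h3⟩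
        exact ⟨h1, (Nat.le_div_iff_mul_le hpi).mpr h3⟩
      · rintro ⟨h1, h2⟩
        exact ⟨⟨h1, le_trans h2 (Nat.div_le_self _ _)⟩, (Nat.le_div_iff_mul_le hpi).mp h2⟩
    rw [this, Nat.card_Icc, Nat.add_sub_cancel]
  have step2 : ∀ n ∈ Icc 1 N,
      Nat.log p (N / n) = ∑ i ∈ Icc 1 (Nat.log p N), if n * p ^ i ≤ N then 1 else 0 := by
    intro n hn
    simp only [Finset.mem_Icc] at hn
    have hn0 : 0 < n := hn.1
    have hNn : N / n ≠ 0 := by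
      have : 1 ≤ N / n := (Nat.one_le_div_iff hn0).mpr hn.2
      omega
    rw [← Finset.card_filter]
    have : (Icc 1 (Nat.log p N)).filter (fun i => n * p ^ i ≤ N) =
        Icc 1 (Nat.log p (N / n)) := by
      ext i
      simp only [Finset.mem_filter, Finset.mem_Icc]
      constructor
      · rintro ⟨⟨h1, _⟩, h3⟩
        refine ⟨h1, ?_⟩
        rw [Nat.le_log_iff_pow_le hp hNn]
        rw [Nat.le_div_iff_mul_le hn0]
        have := Nat.mul_comm n (p ^ i)
        omega
      · rintro ⟨h1, h2⟩
        have h3 : p ^ i ≤ N / n := (Nat.le_log_iff_pow_le hp hNn).mp h2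
        have h4 : p ^ i * n ≤ N := (Nat.le_div_iff_mul_le hn0).mp h3
        have := Nat.mul_comm n (p ^ i)
        exact ⟨⟨h1, le_trans h2 (Nat.log_mono_right (Nat.div_le_self _ _))⟩, by omega⟩
    rw [this, Nat.card_Icc, Nat.add_sub_cancel]
  rw [Finset.sum_congr rfl step1, Finset.sum_comm, ← Finset.sum_congr rfl step2]

lemma erdos_log_factorial_eq {N : ℕ} (hN : 1 ≤ N) :
    Real.log (N ! : ℕ) = ∑ n ∈ Icc 1 N, psi (N / n) := by
  classical
  have hfac : (∏ p ∈ (range (N + 1)).filter Nat.Prime, p ^ (N !).factorization p) = N ! := by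
    conv_rhs => rw [← Nat.factorization_prod_pow_eq_self (Nat.factorial_ne_zero N)]
    rw [Finsupp.prod]
    apply (Finset.prod_subset ?_ ?_).symm
    · intro p hps
      have hps' : p ∈ (N !).primeFactors := by rwa [Nat.support_factorization] at hps
      have hpp : p.Prime := Nat.prime_of_mem_primeFactors hps'
      have hdvd : p ∣ N ! := Nat.dvd_of_mem_primeFactors hps'
      have : p ≤ N := (Nat.Prime.dvd_factorial hpp).mp hdvd
      simp only [Finset.mem_filter, Finset.mem_range]
      exact ⟨by omega, hpp⟩
    · intro p _ hnp
      rw [Finsupp.notMem_support_iff.mp hnp, pow_zero]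
  have hlog1 : Real.log (N ! : ℕ) =
      ∑ p ∈ (range (N + 1)).filter Nat.Prime,
        ((N !).factorization p : ℝ) * Real.log p := by
    conv_lhs => rw [← hfac]
    push_cast
    rw [Real.log_prod]
    · apply Finset.sum_congr rfl
      intro p hp
      rw [Real.log_pow]
    · intro p hp
      simp only [Finset.mem_filter] at hp
      exact pow_ne_zero _ (by exact_mod_cast hp.2.pos.ne')
  have hval : ∀ p ∈ (range (N + 1)).filter Nat.Prime,
      (N !).factorization p = ∑ n ∈ Icc 1 N, Nat.log p (N / n) := by
    intro p hp
    simp only [Finset.mem_filter, Finset.mem_range] at hp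
    haveI : Fact p.Prime := ⟨hp.2⟩
    rw [Nat.factorization_def _ hp.2, padicValNat_factorial (lt_add_one (Nat.log p N)),
      show Ico 1 (Nat.log p N + 1) = Icc 1 (Nat.log p N) from Finset.Ico_add_one_right_eq_Icc _ _,
      erdos_count_swap hp.2.one_lt]
  rw [hlog1, Finset.sum_congr rfl (fun p hp => by rw [hval p hp])]
  have : ∀ p ∈ (range (N + 1)).filter Nat.Prime,
      ((∑ n ∈ Icc 1 N, Nat.log p (N / n) : ℕ) : ℝ) * Real.log p =
      ∑ n ∈ Icc 1 N, (Nat.log p (N / n) : ℝ) * Real.log p := by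
    intro p _
    push_cast
    rw [Finset.sum_mul]
  rw [Finset.sum_congr rfl this, Finset.sum_comm]
  apply Finset.sum_congr rfl
  intro n hn
  rw [erdos_psi_extend (Nat.div_le_self N n)]

lemma erdos_log_factorial_le {N : ℕ} (hN : 1 ≤ N) :
    Real.log (N ! : ℕ) ≤ N * Real.log N := by
  have hfac : ((N ! : ℕ) : ℝ) = ∏ n ∈ Icc 1 N, (n : ℝ) := by
    rw [← Nat.cast_prod]
    congr 1
    rw [← Finset.prod_Ico_id_eq_factorial N, show Ico 1 (N + 1) = Icc 1 N from
      Finset.Ico_add_one_right_eq_Icc _ _]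
  rw [hfac, Real.log_prod (fun n hn => by
    simp only [Finset.mem_Icc] at hn
    exact Nat.cast_ne_zero.mpr (by omega))]
  calc ∑ n ∈ Icc 1 N, Real.log n ≤ ∑ n ∈ Icc 1 N, Real.log N := by
        apply Finset.sum_le_sum
        intro n hn
        simp only [Finset.mem_Icc] at hn
        exact Real.log_le_log (by exact_mod_cast hn.1) (by exact_mod_cast hn.2)
    _ = N * Real.log N := by
        rw [Finset.sum_const, Nat.card_Icc, Nat.add_sub_cancel, nsmul_eq_mul]

lemma erdos_harmonic_lower : ∀ T : ℕ, Real.log (T + 1) ≤ ∑ n ∈ Icc 1 T, (1 / n : ℝ)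
  | 0 => by simp
  | T + 1 => by
    have ih := erdos_harmonic_lower T
    have hpos : (0 : ℝ) < T + 1 := by positivity
    have hstep : Real.log (T + 2) - Real.log (T + 1) ≤ 1 / (T + 1) := by
      rw [← Real.log_div (by positivity) (by positivity)]
      have := Real.log_le_sub_one_of_pos (show (0:ℝ) < (T + 2) / (T + 1) by positivity)
      have heq : ((T : ℝ) + 2) / (T + 1) - 1 = 1 / (T + 1) := by
        field_simp
        norm_num
      linarith
    rw [Finset.sum_Icc_succ_top (by omega : 1 ≤ T + 1)]
    push_cast
    push_cast at ih hstep
    have h12 : ((T : ℝ) + 1 + 1) = T + 2 := by ring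
    rw [h12]
    linarith

lemma erdos_exists_good (ε : ℝ) (hε : 0 < ε) (K₀ : ℕ) (hK₀ : 1 ≤ K₀) :
    ∃ K : ℕ, K₀ ≤ K ∧ psi K ≤ (1 + ε) * K := by
  by_contra hcon
  push_neg at hcon
  set x := (1 + ε) * (Real.log (2 * K₀) + 1) / ε with hx
  obtain ⟨N, hN1, hN2⟩ : ∃ N : ℕ, 2 * K₀ ≤ N ∧ x < Real.log N := by
    refine ⟨2 * K₀ + ⌈Real.exp x⌉₊ + 1, by omega, ?_⟩
    have hpos : (0:ℝ) < ((2 * K₀ + ⌈Real.exp x⌉₊ + 1 : ℕ) : ℝ) := by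
      have : (1:ℕ) ≤ 2 * K₀ + ⌈Real.exp x⌉₊ + 1 := by omega
      exact_mod_cast this
    rw [Real.lt_log_iff_exp_lt hpos]
    have h2 : Real.exp x ≤ (⌈Real.exp x⌉₊ : ℝ) := Nat.le_ceil _
    have h4 : ((⌈Real.exp x⌉₊ : ℕ) : ℝ) + 1 ≤ ((2 * K₀ + ⌈Real.exp x⌉₊ + 1 : ℕ) : ℝ) := by
      push_cast
      have : (0:ℝ) ≤ (K₀ : ℝ) := by positivity
      linarith
    linarith
  have hNpos : 0 < N := by omega
  have hNR : (0:ℝ) < N := by exact_mod_cast hNpos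
  set T := N / K₀ with hT
  have hK₀pos : 0 < K₀ := hK₀
  have hT2 : 2 ≤ T := by
    rw [hT, Nat.le_div_iff_mul_le hK₀pos]
    omega
  have hTN : T ≤ N := Nat.div_le_self _ _
  have hTreal : (N : ℝ) / (2 * K₀) ≤ T := by
    have h5 : N < K₀ * T + K₀ := by
      rw [hT]
      have := Nat.div_add_mod N K₀
      have := Nat.mod_lt N hK₀pos
      omega
    have h6 : (N : ℝ) < K₀ * T + K₀ := by exact_mod_cast h5
    have h7 : (K₀ : ℝ) * T + K₀ ≤ 2 * K₀ * T := by
      have hT1 : (1 : ℝ) ≤ T := by exact_mod_cast le_trans (by omega) hT2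
      have hK₀R : (1:ℝ) ≤ K₀ := by exact_mod_cast hK₀
      nlinarith
    rw [div_le_iff₀ (by positivity)]
    nlinarith
  have hchain : (1 + ε) * ((N : ℝ) * (Real.log N - Real.log (2 * K₀)) - N) ≤ N * Real.log N := by
    have c1 : ∑ n ∈ Icc 1 T, psi (N / n) ≤ Real.log (N ! : ℕ) := by
      rw [erdos_log_factorial_eq hNpos]
      apply Finset.sum_le_sum_of_subset_of_nonneg (Finset.Icc_subset_Icc le_rfl hTN)
      exact fun n _ _ => erdos_psi_nonneg _
    have c2 : ∀ n ∈ Icc 1 T, (1 + ε) * ((N : ℝ) / n - 1) ≤ psi (N / n) := by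
      intro n hn
      simp only [Finset.mem_Icc] at hn
      have hn0 : 0 < n := hn.1
      have hKNn : K₀ ≤ N / n := by
        rw [Nat.le_div_iff_mul_le hn0]
        have h1 : n ≤ N / K₀ := hT ▸ hn.2
        have h2 : n * K₀ ≤ N := (Nat.le_div_iff_mul_le hK₀pos).mp h1
        have := Nat.mul_comm n K₀
        omega
      have hlt := hcon (N / n) hKNn
      have hfloor : (N : ℝ) / n - 1 ≤ ((N / n : ℕ) : ℝ) := by
        have h8 : N < n * (N / n) + n := by
          have := Nat.div_add_mod N n
          have := Nat.mod_lt N hn0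
          omega
        have h9 : (N : ℝ) < n * ((N / n : ℕ) : ℝ) + n := by exact_mod_cast h8
        have hnR : (0:ℝ) < n := by exact_mod_cast hn0
        have h10 : (N : ℝ) / n < ((N / n : ℕ) : ℝ) + 1 := by
          rw [div_lt_iff₀ hnR]
          nlinarith
        linarith
      calc (1 + ε) * ((N : ℝ) / n - 1) ≤ (1 + ε) * ((N / n : ℕ) : ℝ) := by nlinarith
        _ ≤ psi (N / n) := hlt.le
    have c3 : ∑ n ∈ Icc 1 T, (1 + ε) * ((N : ℝ) / n - 1) ≤ Real.log (N ! : ℕ) :=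
      le_trans (Finset.sum_le_sum c2) c1
    have c4 : ∑ n ∈ Icc 1 T, (1 + ε) * ((N : ℝ) / n - 1) =
        (1 + ε) * ((N : ℝ) * (∑ n ∈ Icc 1 T, (1 / n : ℝ)) - T) := by
      rw [← Finset.mul_sum]
      congr 1
      rw [Finset.sum_sub_distrib]
      congr 1
      · rw [Finset.mul_sum]
        exact Finset.sum_congr rfl (fun y _ => by ring)
      · rw [Finset.sum_const, Nat.card_Icc, Nat.add_sub_cancel, nsmul_eq_mul, mul_one]
    have c5 : Real.log N - Real.log (2 * K₀) ≤ ∑ n ∈ Icc 1 T, (1 / n : ℝ) := by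
      have h11 : Real.log ((N : ℝ) / (2 * K₀)) ≤ Real.log T := by
        apply Real.log_le_log (by positivity) hTreal
      have h12 : Real.log (T : ℝ) ≤ Real.log ((T : ℝ) + 1) := by
        apply Real.log_le_log (by exact_mod_cast by omega : (0:ℝ) < T)
        linarith
      have h13 := erdos_harmonic_lower T
      rw [Real.log_div (by positivity) (by positivity)] at h11
      push_cast at h11 h12 h13 ⊢
      linarith
    have c6 : (1 + ε) * ((N : ℝ) * (Real.log N - Real.log (2 * K₀)) - N) ≤
        (1 + ε) * ((N : ℝ) * (∑ n ∈ Icc 1 T, (1 / n : ℝ)) - T) := by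
      have hTleN : (T : ℝ) ≤ N := by exact_mod_cast hTN
      have e1 : (N : ℝ) * (Real.log N - Real.log (2 * K₀)) ≤
          (N : ℝ) * (∑ n ∈ Icc 1 T, (1 / n : ℝ)) := mul_le_mul_of_nonneg_left c5 hNR.le
      apply mul_le_mul_of_nonneg_left (by linarith) (by linarith : (0:ℝ) ≤ 1 + ε)
    calc (1 + ε) * ((N : ℝ) * (Real.log N - Real.log (2 * K₀)) - N)
        ≤ (1 + ε) * ((N : ℝ) * (∑ n ∈ Icc 1 T, (1 / n : ℝ)) - T) := c6
      _ = ∑ n ∈ Icc 1 T, (1 + ε) * ((N : ℝ) / n - 1) := c4.symm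
      _ ≤ Real.log (N ! : ℕ) := c3
      _ ≤ N * Real.log N := erdos_log_factorial_le hNpos
  have hc0 : (0:ℝ) ≤ Real.log (2 * K₀) := by
    apply Real.log_nonneg
    have : (1:ℕ) ≤ 2 * K₀ := by omega
    exact_mod_cast this
  have hdiv : (1 + ε) * (Real.log N - Real.log (2 * K₀) - 1) ≤ Real.log N := by
    have hexp : (1 + ε) * ((N : ℝ) * (Real.log N - Real.log (2 * K₀)) - N) =
        N * ((1 + ε) * (Real.log N - Real.log (2 * K₀) - 1)) := by ring
    rw [hexp] at hchain
    exact le_of_mul_le_mul_left (by linarith [hchain]) hNR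
  have hfin : Real.log N ≤ x := by
    rw [hx]
    rw [le_div_iff₀ hε]
    nlinarith
  linarith

lemma erdos_logM_le (K : ℕ) : Real.log (M K : ℕ) ≤ 2 * psi K := by
  have hcast : ((M K : ℕ) : ℝ) = ∏ p ∈ (Finset.range (K + 1)).filter Nat.Prime,
      ((p : ℝ) ^ (Nat.log p K + 1)) := by
    unfold M
    push_cast
    rfl
  rw [hcast, Real.log_prod (fun p hp => by
    simp only [Finset.mem_filter] at hp
    exact pow_ne_zero _ (by exact_mod_cast hp.2.pos.ne'))]
  unfold psi
  rw [Finset.mul_sum]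
  apply Finset.sum_le_sum
  intro p hp
  simp only [Finset.mem_filter, Finset.mem_range] at hp
  have hL : 1 ≤ Nat.log p K := Nat.log_pos hp.2.one_lt (by omega)
  have hlogp : 0 ≤ Real.log p := Real.log_nonneg (by exact_mod_cast hp.2.one_lt.le)
  rw [Real.log_pow]
  have : ((Nat.log p K + 1 : ℕ) : ℝ) ≤ 2 * (Nat.log p K : ℝ) := by
    have : (1 : ℝ) ≤ (Nat.log p K : ℝ) := by exact_mod_cast hL
    push_cast
    linarith
  nlinarith

/-! ### The sequence -/

noncomputable def KK : ℕ → ℕ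
  | 0 => Classical.choose (erdos_exists_good (1 / (((0:ℕ):ℝ) + 1)) (by norm_num) (2 ^ 20) (by norm_num))
  | (j + 1) => Classical.choose (erdos_exists_good (1 / (((j:ℝ) + 1) + 1)) (by positivity)
      (max (M (KK j) + 1) (2 ^ 20)) (le_trans (by norm_num) (le_max_right _ _)))

lemma erdos_KK_spec (j : ℕ) :
    2 ^ 20 ≤ KK j ∧ psi (KK j) ≤ (1 + 1 / ((j:ℝ) + 1)) * KK j := by
  cases j with
  | zero =>
    have h := Classical.choose_spec
      (erdos_exists_good (1 / (((0:ℕ):ℝ) + 1)) (by norm_num) (2 ^ 20) (by norm_num))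
    exact ⟨h.1, h.2⟩
  | succ j =>
    have h := Classical.choose_spec (erdos_exists_good (1 / (((j:ℝ) + 1) + 1)) (by positivity)
      (max (M (KK j) + 1) (2 ^ 20)) (le_trans (by norm_num) (le_max_right _ _)))
    refine ⟨le_trans (le_max_right _ _) h.1, ?_⟩
    have hc : ((j + 1 : ℕ) : ℝ) + 1 = ((j:ℝ) + 1) + 1 := by push_cast; ring
    rw [show KK (j + 1) = Classical.choose (erdos_exists_good (1 / (((j:ℝ) + 1) + 1))
      (by positivity) (max (M (KK j) + 1) (2 ^ 20)) (le_trans (by norm_num) (le_max_right _ _)))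
      from rfl, hc]
    exact h.2

lemma erdos_KK_gt (j : ℕ) : M (KK j) + 1 ≤ KK (j + 1) := by
  have h := Classical.choose_spec (erdos_exists_good (1 / (((j:ℝ) + 1) + 1)) (by positivity)
    (max (M (KK j) + 1) (2 ^ 20)) (le_trans (by norm_num) (le_max_right _ _)))
  exact le_trans (le_max_left _ _) h.1

theorem stmt_7 :
    ∃ nseq : ℕ → ℕ, StrictMono nseq ∧
      ∃ e : ℕ → ℝ, Filter.Tendsto e Filter.atTop (nhds 0) ∧
        ∀ j, ((1 : ℝ) / 2 + e j) * Real.log (nseq j) ≤ f (nseq j) := by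
  refine ⟨fun j => M (KK j) - 1, ?_, fun j => -(1 / (2 * ((j:ℝ) + 2))), ?_, ?_⟩
  · apply strictMono_nat_of_lt_succ
    intro j
    have h1 := erdos_KK_gt j
    have h2 : KK (j + 1) < M (KK (j + 1)) := erdos_M_gt (by have := (erdos_KK_spec (j+1)).1; omega)
    have h3 : KK j < M (KK j) := erdos_M_gt (by have := (erdos_KK_spec j).1; omega)
    omega
  · have h1 : Filter.Tendsto (fun j : ℕ => 1 / ((j:ℝ) + 1)) Filter.atTop (nhds 0) :=
      tendsto_one_div_add_atTop_nhds_zero_nat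
    have h2 : Filter.Tendsto (fun j : ℕ => j + 1) Filter.atTop Filter.atTop :=
      Filter.tendsto_add_atTop_nat 1
    have h3 := (h1.comp h2).const_mul (-(1/2) : ℝ)
    rw [mul_zero] at h3
    have h4 : (fun j : ℕ => -(1 / (2 * ((j:ℝ) + 2)))) =
        (fun j : ℕ => (-(1/2) : ℝ) * (1 / (((j + 1 : ℕ) : ℝ) + 1))) := by
      funext j
      push_cast
      have : ((j:ℝ) + 2) ≠ 0 := by positivity
      field_simp
      ring
    rw [h4]
    exact h3
  · intro j
    have hK20 : 2 ^ 20 ≤ KK j := (erdos_KK_spec j).1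
    have hpsi : psi (KK j) ≤ (1 + 1 / ((j:ℝ) + 1)) * KK j := (erdos_KK_spec j).2
    have hK2 : 2 ≤ KK j := by omega
    have hMgt : KK j < M (KK j) := erdos_M_gt hK2
    have hf : ((KK j : ℝ)) + 1 ≤ f (M (KK j) - 1) := by
      have := erdos_f_lower hK20
      exact_mod_cast this
    have hnpos : (0:ℝ) < ((M (KK j) - 1 : ℕ) : ℝ) := by
      have : 1 ≤ M (KK j) - 1 := by omega
      exact_mod_cast this
    have hlog1 : Real.log ((M (KK j) - 1 : ℕ) : ℝ) ≤ Real.log ((M (KK j) : ℕ) : ℝ) :=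
      Real.log_le_log hnpos (by exact_mod_cast (by omega : M (KK j) - 1 ≤ M (KK j)))
    have hlog2 : Real.log ((M (KK j) - 1 : ℕ) : ℝ) ≤
        2 * ((1 + 1 / ((j:ℝ) + 1)) * KK j) :=
      le_trans hlog1 (le_trans (erdos_logM_le (KK j)) (by linarith))
    have hcoef : (0:ℝ) ≤ 1 / 2 + -(1 / (2 * ((j:ℝ) + 2))) := by
      have hj2 : (2:ℝ) ≤ 2 * ((j:ℝ) + 2) := by
        have : (0:ℝ) ≤ (j:ℝ) := by positivity
        linarith
      have := one_div_le_one_div_of_le (by norm_num : (0:ℝ) < 2) hj2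
      linarith
    calc ((1:ℝ) / 2 + -(1 / (2 * ((j:ℝ) + 2)))) * Real.log ((M (KK j) - 1 : ℕ) : ℝ)
        ≤ ((1:ℝ) / 2 + -(1 / (2 * ((j:ℝ) + 2)))) * (2 * ((1 + 1 / ((j:ℝ) + 1)) * KK j)) :=
          mul_le_mul_of_nonneg_left hlog2 hcoef
      _ = (KK j : ℝ) := by
          have h1 : ((j:ℝ) + 1) ≠ 0 := by positivity
          have h2 : ((j:ℝ) + 2) ≠ 0 := by positivity
          field_simp
          ring
      _ ≤ ((KK j : ℝ)) + 1 := by linarith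
      _ ≤ f (M (KK j) - 1) := hf
end

section
/- Let A ⊂ ℕ be defined by A = [2,3] ∪ ⋃_{k≥1} ({c_k} ∪ B_k ∪ F_k) with c_k = 4·5^{k−1}, B_k = [5·5^{k−1}, 6·5^{k−1} − 1], F_k = [10·5^{k−1} − 1, 15·5^{k−1}]. Then for every k ≥ 0, the interval [4, 6·5^k] is contained in A_k + A_k, where A_k is the union of [2,3] with the stages 1 through k. -/
/-!
Write `p = 5 ^ k`. Stage `k + 1` contributes the intervals `{4p}`, `[5p, 6p - 1]` and
`[10p - 1, 15p]`, and stage `k` (for `k ≥ 1`) contributes `[2p - 1, 3p]`. The pairwise sums of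
these intervals and of `[2, 3]` are again intervals, and they overlap enough to tile
`[6p + 1, 30p]`; together with the induction hypothesis `[4, 6p]` this gives `[4, 6 · 5p]`.
-/

open Pointwise Set

def c (k : ℕ) : ℕ := 4 * 5 ^ (k - 1)
def B (k : ℕ) : Set ℕ := Set.Icc (5 * 5 ^ (k - 1)) (6 * 5 ^ (k - 1) - 1)
def F (k : ℕ) : Set ℕ := Set.Icc (10 * 5 ^ (k - 1) - 1) (15 * 5 ^ (k - 1))
def A : Set ℕ := Set.Icc 2 3 ∪ ⋃ k ∈ {k : ℕ | 1 ≤ k}, ({c k} ∪ B k ∪ F k)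

def Apartial (k : ℕ) : Set ℕ :=
  Set.Icc 2 3 ∪ ⋃ i ∈ Set.Icc 1 k, ({c i} ∪ B i ∪ F i)

namespace Nat

theorem mem_add_of_Icc_subset {S T : Set ℕ} {a b c d n : ℕ} (hab : a ≤ b) (hcd : c ≤ d)
    (hS : Icc a b ⊆ S) (hT : Icc c d ⊆ T) (hn : n ∈ Icc (a + c) (b + d)) : n ∈ S + T := by
  obtain ⟨hn₁, hn₂⟩ := hn
  have hle : max a (n - d) ≤ n := max_le (by omega) (Nat.sub_le n d)
  exact ⟨max a (n - d), hS ⟨le_max_left _ _, by omega⟩, n - max a (n - d),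
    hT ⟨by omega, by omega⟩, Nat.add_sub_cancel' hle⟩

theorem Icc_four_thirty_subset_add_self {S : Set ℕ} (h23 : Icc 2 3 ⊆ S) (h4 : Icc 4 4 ⊆ S)
    (h5 : Icc 5 5 ⊆ S) (hF : Icc 9 15 ⊆ S) : Icc 4 30 ⊆ S + S := by
  intro n hn
  have cover : 2 + 2 ≤ n ∧ n ≤ 3 + 3 ∨ 5 + 2 ≤ n ∧ n ≤ 5 + 3 ∨ 4 + 5 ≤ n ∧ n ≤ 4 + 5 ∨
      5 + 5 ≤ n ∧ n ≤ 5 + 5 ∨ 2 + 9 ≤ n ∧ n ≤ 3 + 15 ∨ 9 + 9 ≤ n ∧ n ≤ 15 + 15 := by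
    simp only [mem_Icc] at hn; omega
  rcases cover with h | h | h | h | h | h
  · exact mem_add_of_Icc_subset (by norm_num) (by norm_num) h23 h23 h
  · exact mem_add_of_Icc_subset (by norm_num) (by norm_num) h5 h23 h
  · exact mem_add_of_Icc_subset (by norm_num) (by norm_num) h4 h5 h
  · exact mem_add_of_Icc_subset (by norm_num) (by norm_num) h5 h5 h
  · exact mem_add_of_Icc_subset (by norm_num) (by norm_num) h23 hF h
  · exact mem_add_of_Icc_subset (by norm_num) (by norm_num) hF hF h

theorem Icc_six_mul_add_one_thirty_mul_subset_add_self {S : Set ℕ} {p : ℕ} (hp : 1 ≤ p)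
    (h23 : Icc 2 3 ⊆ S) (hFprev : Icc (2 * p - 1) (3 * p) ⊆ S) (hc : Icc (4 * p) (4 * p) ⊆ S)
    (hB : Icc (5 * p) (6 * p - 1) ⊆ S) (hF : Icc (10 * p - 1) (15 * p) ⊆ S) :
    Icc (6 * p + 1) (30 * p) ⊆ S + S := by
  intro n hn
  have cover :
      5 * p + 2 ≤ n ∧ n ≤ 6 * p - 1 + 3 ∨
      4 * p + (2 * p - 1) ≤ n ∧ n ≤ 4 * p + 3 * p ∨
      5 * p + (2 * p - 1) ≤ n ∧ n ≤ 6 * p - 1 + 3 * p ∨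
      4 * p + 5 * p ≤ n ∧ n ≤ 4 * p + (6 * p - 1) ∨
      5 * p + 5 * p ≤ n ∧ n ≤ 6 * p - 1 + (6 * p - 1) ∨
      2 + (10 * p - 1) ≤ n ∧ n ≤ 3 + 15 * p ∨
      5 * p + (10 * p - 1) ≤ n ∧ n ≤ 6 * p - 1 + 15 * p ∨
      10 * p - 1 + (10 * p - 1) ≤ n ∧ n ≤ 15 * p + 15 * p := by
    simp only [mem_Icc] at hn; omega
  rcases cover with h | h | h | h | h | h | h | h
  · exact mem_add_of_Icc_subset (by omega) (by norm_num) hB h23 h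
  · exact mem_add_of_Icc_subset le_rfl (by omega) hc hFprev h
  · exact mem_add_of_Icc_subset (by omega) (by omega) hB hFprev h
  · exact mem_add_of_Icc_subset le_rfl (by omega) hc hB h
  · exact mem_add_of_Icc_subset (by omega) (by omega) hB hB h
  · exact mem_add_of_Icc_subset (by norm_num) (by omega) h23 hF h
  · exact mem_add_of_Icc_subset (by omega) (by omega) hB hF h
  · exact mem_add_of_Icc_subset (by omega) (by omega) hF hF h

end Nat

theorem Apartial_mono {m n : ℕ} (h : m ≤ n) : Apartial m ⊆ Apartial n :=
  union_subset_union_right _ (biUnion_subset_biUnion_left (Icc_subset_Icc_right h))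

theorem Icc_two_three_subset_Apartial (k : ℕ) : Icc 2 3 ⊆ Apartial k :=
  subset_union_left

theorem stage_subset_Apartial {i k : ℕ} (hi : 1 ≤ i) (hik : i ≤ k) :
    {c i} ∪ B i ∪ F i ⊆ Apartial k :=
  (subset_biUnion_of_mem (u := fun i ↦ {c i} ∪ B i ∪ F i)
    (show i ∈ Icc 1 k from ⟨hi, hik⟩)).trans subset_union_right

theorem c_succ (i : ℕ) : c (i + 1) = 4 * 5 ^ i := rfl

theorem B_succ (i : ℕ) : B (i + 1) = Icc (5 * 5 ^ i) (6 * 5 ^ i - 1) := rfl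

theorem F_succ (i : ℕ) : F (i + 1) = Icc (10 * 5 ^ i - 1) (15 * 5 ^ i) := rfl

theorem Icc_c_succ_subset_Apartial {i k : ℕ} (h : i + 1 ≤ k) :
    Icc (4 * 5 ^ i) (4 * 5 ^ i) ⊆ Apartial k := by
  rw [Icc_self, ← c_succ]
  exact (subset_union_left.trans subset_union_left).trans (stage_subset_Apartial (by omega) h)

theorem B_succ_subset_Apartial {i k : ℕ} (h : i + 1 ≤ k) :
    Icc (5 * 5 ^ i) (6 * 5 ^ i - 1) ⊆ Apartial k := by
  rw [← B_succ]
  exact (subset_union_right.trans subset_union_left).trans (stage_subset_Apartial (by omega) h)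

theorem F_succ_subset_Apartial {i k : ℕ} (h : i + 1 ≤ k) :
    Icc (10 * 5 ^ i - 1) (15 * 5 ^ i) ⊆ Apartial k := by
  rw [← F_succ]
  exact subset_union_right.trans (stage_subset_Apartial (by omega) h)

theorem Icc_subset_Apartial_add_self_succ_succ (j : ℕ) :
    Icc (6 * 5 ^ (j + 1) + 1) (30 * 5 ^ (j + 1)) ⊆ Apartial (j + 2) + Apartial (j + 2) := by
  have hpow : 5 ^ (j + 1) = 5 * 5 ^ j := pow_succ' 5 j
  refine Nat.Icc_six_mul_add_one_thirty_mul_subset_add_self (Nat.one_le_pow _ _ (by norm_num))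
    (Icc_two_three_subset_Apartial _) ?_ (Icc_c_succ_subset_Apartial le_rfl)
    (B_succ_subset_Apartial le_rfl) (F_succ_subset_Apartial le_rfl)
  rw [show 2 * 5 ^ (j + 1) - 1 = 10 * 5 ^ j - 1 by omega,
    show 3 * 5 ^ (j + 1) = 15 * 5 ^ j by omega]
  exact F_succ_subset_Apartial (by omega)

theorem stmt_10 (k : ℕ) :
    Set.Icc 4 (6 * 5 ^ k) ⊆ Apartial k + Apartial k := by
  induction k with
  | zero =>
    intro n hn
    exact Nat.mem_add_of_Icc_subset (by norm_num) (by norm_num) (Icc_two_three_subset_Apartial 0)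
      (Icc_two_three_subset_Apartial 0) (by simpa using hn)
  | succ k ih =>
    rcases k with _ | j
    · exact Nat.Icc_four_thirty_subset_add_self (Icc_two_three_subset_Apartial 1)
        (Icc_c_succ_subset_Apartial (i := 0) le_rfl) (B_succ_subset_Apartial (i := 0) le_rfl)
        (F_succ_subset_Apartial (i := 0) le_rfl)
    intro n hn
    by_cases hn' : n ≤ 6 * 5 ^ (j + 1)
    · exact add_subset_add (Apartial_mono j.succ.le_succ) (Apartial_mono j.succ.le_succ)
        (ih ⟨hn.1, hn'⟩)
    · have hpow : 6 * 5 ^ (j + 2) = 30 * 5 ^ (j + 1) := by ring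
      exact Icc_subset_Apartial_add_self_succ_succ j ⟨by omega, hpow ▸ hn.2⟩
end

section
/- With A as defined (c_k = 4·5^{k−1}, B_k = [5·5^{k−1}, 6·5^{k−1}−1], F_k = [10·5^{k−1}−1, 15·5^{k−1}], A = [2,3] ∪ ⋃_{k≥1}({c_k} ∪ B_k ∪ F_k)), the set A is an additive basis of order 2: every integer n ≥ 4 can be written as a + b with a, b ∈ A. -/
open Pointwise

lemma mem_A_small {n : ℕ} (h1 : 2 ≤ n) (h2 : n ≤ 3) : n ∈ A :=
  Or.inl ⟨h1, h2⟩

lemma mem_A_of_mem (k : ℕ) (hk : 1 ≤ k) {n : ℕ} (h : n ∈ {c k} ∪ B k ∪ F k) : n ∈ A :=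
  Or.inr (Set.mem_biUnion hk h)

lemma mem_A_c {m n : ℕ} (j : ℕ) (hm : m = 5 ^ j) (h : n = 4 * m) : n ∈ A :=
  mem_A_of_mem (j + 1) (Nat.le_add_left 1 j)
    (Or.inl (Or.inl (by simp [c, hm, h])))

lemma mem_A_B {m n : ℕ} (j : ℕ) (hm : m = 5 ^ j) (h1 : 5 * m ≤ n) (h2 : n + 1 ≤ 6 * m) :
    n ∈ A := by
  have hm1 : 1 ≤ m := hm ▸ Nat.one_le_pow _ _ (by norm_num)
  refine mem_A_of_mem (j + 1) (Nat.le_add_left 1 j) (Or.inl (Or.inr ?_))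
  simp only [B, Nat.add_sub_cancel, Set.mem_Icc, ← hm]
  omega

lemma mem_A_F {m n : ℕ} (j : ℕ) (hm : m = 5 ^ j) (h1 : 10 * m - 1 ≤ n) (h2 : n ≤ 15 * m) :
    n ∈ A := by
  refine mem_A_of_mem (j + 1) (Nat.le_add_left 1 j) (Or.inr ?_)
  simp only [F, Nat.add_sub_cancel, Set.mem_Icc, ← hm]
  exact ⟨h1, h2⟩

lemma key (j n : ℕ) (h1 : 9 * 5 ^ j ≤ n) (h2 : n < 45 * 5 ^ j) :
    ∃ a ∈ A, ∃ b ∈ A, n = a + b := by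
  set m := 5 ^ j with hm
  have hm1 : 1 ≤ m := Nat.one_le_pow _ _ (by norm_num)
  rcases le_or_gt n (10 * m - 1) with h | h
  · -- P1: (4m, n-4m) with n-4m ∈ B
    exact ⟨4 * m, mem_A_c j hm rfl, n - 4 * m,
      mem_A_B j hm (by omega) (by omega), by omega⟩
  rcases le_or_gt n (10 * m) with h' | h'
  · -- P2: n = 10m
    exact ⟨5 * m, mem_A_B j hm le_rfl (by omega), 5 * m,
      mem_A_B j hm le_rfl (by omega), by omega⟩
  rcases le_or_gt n (15 * m + 2) with h'' | h''
  · -- P3: (2, n-2)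
    exact ⟨2, mem_A_small le_rfl (by norm_num), n - 2,
      mem_A_F j hm (by omega) (by omega), by omega⟩
  rcases le_or_gt n (20 * m) with h3 | h3
  · -- P4: (5m, n-5m)
    exact ⟨5 * m, mem_A_B j hm le_rfl (by omega), n - 5 * m,
      mem_A_F j hm (by omega) (by omega), by omega⟩
  rcases le_or_gt n (21 * m - 1) with h4 | h4
  · -- P5a: (n-15m, 15m) with n-15m ∈ B
    exact ⟨n - 15 * m, mem_A_B j hm (by omega) (by omega), 15 * m,
      mem_A_F j hm (by omega) (by omega), by omega⟩
  rcases le_or_gt n (25 * m - 2) with h5 | h5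
  · -- P5b: (10m-1, n-(10m-1))
    exact ⟨10 * m - 1, mem_A_F j hm le_rfl (by omega), n - (10 * m - 1),
      mem_A_F j hm (by omega) (by omega), by omega⟩
  rcases le_or_gt n (30 * m) with h6 | h6
  · -- P5c: (15m, n-15m)
    exact ⟨15 * m, mem_A_F j hm (by omega) le_rfl, n - 15 * m,
      mem_A_F j hm (by omega) (by omega), by omega⟩
  have hm5 : 5 * m = 5 ^ (j + 1) := by rw [hm, pow_succ]; ring
  rcases le_or_gt n (35 * m) with h7 | h7
  · -- P6: (20m, n-20m) with 20m = c at scale j+1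
    exact ⟨20 * m, mem_A_c (j + 1) (m := 5 * m) hm5 (by ring), n - 20 * m,
      mem_A_F j hm (by omega) (by omega), by omega⟩
  rcases le_or_gt n (40 * m - 1) with h8 | h8
  · -- P7a: (25m, n-25m) with 25m ∈ B at scale j+1
    exact ⟨25 * m, mem_A_B (j + 1) (m := 5 * m) hm5 (by omega) (by omega), n - 25 * m,
      mem_A_F j hm (by omega) (by omega), by omega⟩
  · -- P7b: (n-15m, 15m) with n-15m ∈ B at scale j+1
    exact ⟨n - 15 * m, mem_A_B (j + 1) (m := 5 * m) hm5 (by omega) (by omega), 15 * m,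
      mem_A_F j hm (by omega) (by omega), by omega⟩

lemma upto (j : ℕ) : ∀ n : ℕ, 4 ≤ n → n < 45 * 5 ^ j → ∃ a ∈ A, ∃ b ∈ A, n = a + b := by
  induction j with
  | zero =>
    intro n h4 h45
    rcases le_or_gt 9 n with h | h
    · exact key 0 n (by simpa using h) (by simpa using h45)
    · have h2 : (2 : ℕ) ∈ A := mem_A_small le_rfl (by norm_num)
      have h3 : (3 : ℕ) ∈ A := mem_A_small (by norm_num) le_rfl
      have hc : (4 : ℕ) ∈ A := mem_A_c 0 rfl (by norm_num)
      interval_cases n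
      · exact ⟨2, h2, 2, h2, rfl⟩
      · exact ⟨2, h2, 3, h3, rfl⟩
      · exact ⟨3, h3, 3, h3, rfl⟩
      · exact ⟨3, h3, 4, hc, rfl⟩
      · exact ⟨4, hc, 4, hc, rfl⟩
  | succ j ih =>
    intro n h4 h45
    rcases lt_or_ge n (45 * 5 ^ j) with h | h
    · exact ih n h4 h
    · exact key (j + 1) n (by rw [pow_succ]; omega) h45

theorem stmt_11 : ∀ n : ℕ, 4 ≤ n → ∃ a ∈ A, ∃ b ∈ A, n = a + b := by
  intro n hn
  have h : n < 45 * 5 ^ n := by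
    have := Nat.lt_pow_self (n := n) (by norm_num : 1 < 5)
    omega
  exact upto n n hn h
end

section
/- With A as defined (c_k = 4·5^{k−1}, B_k = [5·5^{k−1}, 6·5^{k−1}−1], F_k = [10·5^{k−1}−1, 15·5^{k−1}], A = [2,3] ∪ ⋃_{k≥1}({c_k} ∪ B_k ∪ F_k)), set J_k = [9·5^{k−1}, 10·5^{k−1} − 1]. If n ∈ J_k and n = a + b with a, b ∈ A, then one of a, b equals c_k and the other lies in B_k. -/
/-!
Every stage `{c j} ∪ B j ∪ F j` lies in `[4·5^(j-1), 15·5^(j-1)]`, so, writing `m = 5^(k-1)`, the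
elements of `A` below `10m - 1` are either at most `3m` (earlier stages and `[2,3]`) or equal to
`c k = 4m` or lie in `B k = [5m, 6m - 1]`; later stages start at `20m`. A sum of two such elements
lands in `J k = [9m, 10m - 1]` only as `4m + [5m, 6m - 1]`: the other combinations give at most
`8m` or `9m - 1`, or at least `10m`.
-/

open Pointwise

def J (k : ℕ) : Set ℕ := Set.Icc (9 * 5 ^ (k - 1)) (10 * 5 ^ (k - 1) - 1)

def stage (k : ℕ) : Set ℕ := {c k} ∪ B k ∪ F k

lemma mem_A_iff {x : ℕ} : x ∈ A ↔ x ∈ Set.Icc 2 3 ∨ ∃ k, 1 ≤ k ∧ x ∈ stage k := by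
  simp [A, stage]

lemma mem_stage_iff {k x : ℕ} :
    x ∈ stage k ↔ x = 4 * 5 ^ (k - 1) ∨ (5 * 5 ^ (k - 1) ≤ x ∧ x ≤ 6 * 5 ^ (k - 1) - 1) ∨
      (10 * 5 ^ (k - 1) - 1 ≤ x ∧ x ≤ 15 * 5 ^ (k - 1)) := by
  simp [stage, c, B, F, or_assoc]

lemma stage_subset_Icc (k : ℕ) : stage k ⊆ Set.Icc (4 * 5 ^ (k - 1)) (15 * 5 ^ (k - 1)) := by
  intro x hx
  have : 1 ≤ 5 ^ (k - 1) := Nat.one_le_pow _ _ (by norm_num)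
  rw [mem_stage_iff] at hx
  constructor <;> omega

lemma five_mul_pow_pred_le_pow_pred {i j : ℕ} (hi : 1 ≤ i) (hij : i < j) :
    5 * 5 ^ (i - 1) ≤ 5 ^ (j - 1) := by
  rw [mul_pow_sub_one (by omega)]
  exact Nat.pow_le_pow_right (by norm_num) (by omega)

lemma le_of_mem_stage_of_lt {j k x : ℕ} (hj : 1 ≤ j) (hjk : j < k) (hx : x ∈ stage j) :
    x ≤ 3 * 5 ^ (k - 1) := by
  have := five_mul_pow_pred_le_pow_pred hj hjk
  have := (stage_subset_Icc j hx).2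
  omega

lemma le_of_mem_stage_of_gt {j k x : ℕ} (hk : 1 ≤ k) (hkj : k < j) (hx : x ∈ stage j) :
    20 * 5 ^ (k - 1) ≤ x := by
  have := five_mul_pow_pred_le_pow_pred hk hkj
  have := (stage_subset_Icc j hx).1
  omega

lemma two_le_of_mem_A {x : ℕ} (hx : x ∈ A) : 2 ≤ x := by
  rcases mem_A_iff.1 hx with h | ⟨j, -, hj⟩
  · exact h.1
  · have := (stage_subset_Icc j hj).1
    have : 1 ≤ 5 ^ (j - 1) := Nat.one_le_pow _ _ (by norm_num)
    omega

lemma mem_A_of_lt {k x : ℕ} (hk : 1 ≤ k) (hx : x ∈ A) (hlt : x < 10 * 5 ^ (k - 1) - 1) :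
    x ≤ 3 * 5 ^ (k - 1) ∨ x = c k ∨ x ∈ B k := by
  have : 1 ≤ 5 ^ (k - 1) := Nat.one_le_pow _ _ (by norm_num)
  rcases mem_A_iff.1 hx with h | ⟨j, hj, hxj⟩
  · left; exact h.2.trans (by omega)
  rcases lt_trichotomy j k with hjk | rfl | hkj
  · exact Or.inl (le_of_mem_stage_of_lt hj hjk hxj)
  · simp only [stage, Set.mem_union, Set.mem_singleton_iff] at hxj
    rcases hxj with (h | h) | h
    · exact Or.inr (Or.inl h)
    · exact Or.inr (Or.inr h)
    · exact absurd h.1 (by omega)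
  · have := le_of_mem_stage_of_gt hk hkj hxj
    omega

theorem stmt_12 (k : ℕ) (hk : 1 ≤ k) (n a b : ℕ)
    (hn : n ∈ J k) (ha : a ∈ A) (hb : b ∈ A) (hab : n = a + b) :
    (a = c k ∧ b ∈ B k) ∨ (b = c k ∧ a ∈ B k) := by
  have : 1 ≤ 5 ^ (k - 1) := Nat.one_le_pow _ _ (by norm_num)
  simp only [J, Set.mem_Icc] at hn
  have ha2 := two_le_of_mem_A ha
  have hb2 := two_le_of_mem_A hb
  have hca := mem_A_of_lt hk ha (by omega)
  have hcb := mem_A_of_lt hk hb (by omega)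
  simp only [B, c, Set.mem_Icc] at hca hcb ⊢
  omega
end

section
/- There exists a set A ⊂ ℕ such that every integer n ≥ 4 is a sum of two elements of A, but for every partition A = A₁ ⊔ A₂, at least one of the sumsets A₁ + A₁, A₂ + A₂ has unbounded gaps (i.e., is not syndetic). -/
open Pointwise

def Syndetic (S : Set ℕ) : Prop :=
  ∃ d : ℕ, ∀ n : ℕ, ∃ m ∈ S, n ≤ m ∧ m ≤ n + d

def myA : Set ℕ :=
  {n | n = 2 ∨ n = 3 ∨ ∃ k : ℕ,
    n = 4 * 5 ^ k ∨ (5 * 5 ^ k ≤ n ∧ n < 6 * 5 ^ k) ∨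
      (10 * 5 ^ k ≤ n + 1 ∧ n ≤ 15 * 5 ^ k)}

lemma mem2 : (2 : ℕ) ∈ myA := Or.inl rfl
lemma mem3 : (3 : ℕ) ∈ myA := Or.inr (Or.inl rfl)
lemma mem4 (k : ℕ) : 4 * 5 ^ k ∈ myA := Or.inr (Or.inr ⟨k, Or.inl rfl⟩)
lemma memB (k x : ℕ) (h1 : 5 * 5 ^ k ≤ x) (h2 : x < 6 * 5 ^ k) : x ∈ myA :=
  Or.inr (Or.inr ⟨k, Or.inr (Or.inl ⟨h1, h2⟩)⟩)
lemma memC (k x : ℕ) (h1 : 10 * 5 ^ k ≤ x + 1) (h2 : x ≤ 15 * 5 ^ k) : x ∈ myA :=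
  Or.inr (Or.inr ⟨k, Or.inr (Or.inr ⟨h1, h2⟩)⟩)

lemma pow5_pos (k : ℕ) : 1 ≤ 5 ^ k := Nat.one_le_pow _ _ (by norm_num)

lemma pow5_cases (j k : ℕ) : 5 ^ j ≤ 5 ^ k ∨ 5 ^ j = 5 * 5 ^ k ∨ 25 * 5 ^ k ≤ 5 ^ j := by
  rcases le_or_gt j k with h | h
  · exact Or.inl (Nat.pow_le_pow_right (by norm_num) h)
  · rcases eq_or_lt_of_le (show k + 1 ≤ j from h) with h2 | h2
    · right; left; rw [← h2, pow_succ]; ring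
    · right; right
      have h3 : 5 ^ (k + 2) ≤ 5 ^ j := Nat.pow_le_pow_right (by norm_num) h2
      have : (5:ℕ) ^ (k + 2) = 25 * 5 ^ k := by ring
      omega

lemma two_le_of_mem {a : ℕ} (h : a ∈ myA) : 2 ≤ a := by
  rcases h with h | h | ⟨j, h⟩
  · omega
  · omega
  · have := pow5_pos j; omega

/-- In the window (15·5^k, 25·5^k) the only element of `myA` is 20·5^k. -/
lemma gap_lemma (k : ℕ) {a : ℕ} (ha : a ∈ myA) (h1 : 15 * 5 ^ k < a)
    (h2 : a < 25 * 5 ^ k) : a = 20 * 5 ^ k := by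
  have hq := pow5_pos k
  rcases ha with h | h | ⟨j, h⟩
  · omega
  · omega
  · have hp := pow5_pos j
    rcases pow5_cases j k with hc | hc | hc <;> omega

/-- If `b ∈ myA`, `2b > 45·5^k` and `b ≤ 50·5^k - 3` then `b` is in the block
`[25·5^k, 30·5^k)`. -/
lemma big_lemma (k : ℕ) {b : ℕ} (hb : b ∈ myA) (h1 : 45 * 5 ^ k + 1 ≤ 2 * b)
    (h2 : b + 3 ≤ 50 * 5 ^ k) : 25 * 5 ^ k ≤ b ∧ b < 30 * 5 ^ k := by
  have hq := pow5_pos k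
  rcases hb with h | h | ⟨j, h⟩
  · omega
  · omega
  · have hp := pow5_pos j
    rcases pow5_cases j k with hc | hc | hc <;> omega

/-- Numbers in `(45·5^k, 50·5^k - 3]` can only be written as `20·5^k + b`. -/
lemma only_rep (k : ℕ) {a b : ℕ} (ha : a ∈ myA) (hb : b ∈ myA)
    (h1 : 45 * 5 ^ k + 1 ≤ a + b) (h2 : a + b + 3 ≤ 50 * 5 ^ k) :
    a = 20 * 5 ^ k ∨ b = 20 * 5 ^ k := by
  have hq := pow5_pos k
  have ha2 := two_le_of_mem ha
  have hb2 := two_le_of_mem hb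
  rcases le_total a b with hab | hab
  · left
    have hbig := big_lemma k hb (by omega) (by omega)
    exact gap_lemma k ha (by omega) (by omega)
  · right
    have hbig := big_lemma k ha (by omega) (by omega)
    exact gap_lemma k hb (by omega) (by omega)

lemma cover : ∀ k n : ℕ, 4 ≤ n → n ≤ 30 * 5 ^ k → ∃ a ∈ myA, ∃ b ∈ myA, n = a + b := by
  intro k
  induction k with
  | zero =>
    intro n h4 h30
    simp only [pow_zero, mul_one] at h30
    have hC : ∀ x : ℕ, 9 ≤ x → x ≤ 15 → x ∈ myA := fun x hx1 hx2 =>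
      memC 0 x (by omega) (by omega)
    have h4' : (4 : ℕ) ∈ myA := mem4 0
    have h5 : (5 : ℕ) ∈ myA := memB 0 5 (by norm_num) (by norm_num)
    interval_cases n
    · exact ⟨2, mem2, 2, mem2, rfl⟩
    · exact ⟨2, mem2, 3, mem3, rfl⟩
    · exact ⟨3, mem3, 3, mem3, rfl⟩
    · exact ⟨2, mem2, 5, h5, rfl⟩
    · exact ⟨3, mem3, 5, h5, rfl⟩
    · exact ⟨4, h4', 5, h5, rfl⟩
    · exact ⟨5, h5, 5, h5, rfl⟩
    · exact ⟨2, mem2, 9, hC 9 (by norm_num) (by norm_num), rfl⟩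
    · exact ⟨3, mem3, 9, hC 9 (by norm_num) (by norm_num), rfl⟩
    · exact ⟨4, h4', 9, hC 9 (by norm_num) (by norm_num), rfl⟩
    · exact ⟨5, h5, 9, hC 9 (by norm_num) (by norm_num), rfl⟩
    · exact ⟨2, mem2, 13, hC 13 (by norm_num) (by norm_num), rfl⟩
    · exact ⟨2, mem2, 14, hC 14 (by norm_num) (by norm_num), rfl⟩
    · exact ⟨2, mem2, 15, hC 15 (by norm_num) (by norm_num), rfl⟩
    · exact ⟨9, hC 9 (by norm_num) (by norm_num), 9, hC 9 (by norm_num) (by norm_num), rfl⟩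
    · exact ⟨9, hC 9 (by norm_num) (by norm_num), 10, hC 10 (by norm_num) (by norm_num), rfl⟩
    · exact ⟨9, hC 9 (by norm_num) (by norm_num), 11, hC 11 (by norm_num) (by norm_num), rfl⟩
    · exact ⟨9, hC 9 (by norm_num) (by norm_num), 12, hC 12 (by norm_num) (by norm_num), rfl⟩
    · exact ⟨9, hC 9 (by norm_num) (by norm_num), 13, hC 13 (by norm_num) (by norm_num), rfl⟩
    · exact ⟨9, hC 9 (by norm_num) (by norm_num), 14, hC 14 (by norm_num) (by norm_num), rfl⟩
    · exact ⟨9, hC 9 (by norm_num) (by norm_num), 15, hC 15 (by norm_num) (by norm_num), rfl⟩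
    · exact ⟨10, hC 10 (by norm_num) (by norm_num), 15, hC 15 (by norm_num) (by norm_num), rfl⟩
    · exact ⟨11, hC 11 (by norm_num) (by norm_num), 15, hC 15 (by norm_num) (by norm_num), rfl⟩
    · exact ⟨12, hC 12 (by norm_num) (by norm_num), 15, hC 15 (by norm_num) (by norm_num), rfl⟩
    · exact ⟨13, hC 13 (by norm_num) (by norm_num), 15, hC 15 (by norm_num) (by norm_num), rfl⟩
    · exact ⟨14, hC 14 (by norm_num) (by norm_num), 15, hC 15 (by norm_num) (by norm_num), rfl⟩
    · exact ⟨15, hC 15 (by norm_num) (by norm_num), 15, hC 15 (by norm_num) (by norm_num), rfl⟩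
  | succ k ih =>
    intro n h4 h30
    by_cases hsmall : n ≤ 30 * 5 ^ k
    · exact ih n h4 hsmall
    push_neg at hsmall
    have hq := pow5_pos k
    have hpow : (5:ℕ) ^ (k + 1) = 5 * 5 ^ k := by rw [pow_succ]; ring
    rw [hpow] at h30
    -- now 30 * 5^k < n ≤ 150 * 5^k, write q = 5^k
    by_cases c1 : n ≤ 35 * 5 ^ k
    · exact ⟨4 * 5 ^ (k+1), mem4 (k+1), n - 20 * 5 ^ k,
        memC k _ (by omega) (by omega), by rw [hpow]; omega⟩
    push_neg at c1
    by_cases c2 : n ≤ 40 * 5 ^ k - 1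
    · exact ⟨25 * 5 ^ k, memB (k+1) _ (by rw [hpow]; omega) (by rw [hpow]; omega),
        n - 25 * 5 ^ k, memC k _ (by omega) (by omega), by omega⟩
    push_neg at c2
    by_cases c3 : n ≤ 45 * 5 ^ k - 1
    · exact ⟨n - 15 * 5 ^ k, memB (k+1) _ (by rw [hpow]; omega) (by rw [hpow]; omega),
        15 * 5 ^ k, memC k _ (by omega) (by omega), by omega⟩
    push_neg at c3
    by_cases c4 : n ≤ 50 * 5 ^ k - 1
    · exact ⟨4 * 5 ^ (k+1), mem4 (k+1), n - 20 * 5 ^ k,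
        memB (k+1) _ (by rw [hpow]; omega) (by rw [hpow]; omega), by rw [hpow]; omega⟩
    push_neg at c4
    by_cases c5 : n ≤ 55 * 5 ^ k - 1
    · exact ⟨25 * 5 ^ k, memB (k+1) _ (by rw [hpow]; omega) (by rw [hpow]; omega),
        n - 25 * 5 ^ k, memB (k+1) _ (by rw [hpow]; omega) (by rw [hpow]; omega), by omega⟩
    push_neg at c5
    by_cases c6 : n ≤ 60 * 5 ^ k - 2
    · exact ⟨30 * 5 ^ k - 1, memB (k+1) _ (by rw [hpow]; omega) (by rw [hpow]; omega),
        n - (30 * 5 ^ k - 1), memB (k+1) _ (by rw [hpow]; omega) (by rw [hpow]; omega),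
        by omega⟩
    push_neg at c6
    by_cases c7 : n ≤ 85 * 5 ^ k - 1
    · exact ⟨n - (10 * 5 ^ k - 1), memC (k+1) _ (by rw [hpow]; omega) (by rw [hpow]; omega),
        10 * 5 ^ k - 1, memC k _ (by omega) (by omega), by omega⟩
    push_neg at c7
    by_cases c8 : n ≤ 90 * 5 ^ k
    · exact ⟨n - 15 * 5 ^ k, memC (k+1) _ (by rw [hpow]; omega) (by rw [hpow]; omega),
        15 * 5 ^ k, memC k _ (by omega) (by omega), by omega⟩
    push_neg at c8
    by_cases c9 : n ≤ 100 * 5 ^ k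
    · exact ⟨25 * 5 ^ k, memB (k+1) _ (by rw [hpow]; omega) (by rw [hpow]; omega),
        n - 25 * 5 ^ k, memC (k+1) _ (by rw [hpow]; omega) (by rw [hpow]; omega), by omega⟩
    push_neg at c9
    by_cases c10 : n ≤ 105 * 5 ^ k - 1
    · exact ⟨30 * 5 ^ k - 1, memB (k+1) _ (by rw [hpow]; omega) (by rw [hpow]; omega),
        n - (30 * 5 ^ k - 1), memC (k+1) _ (by rw [hpow]; omega) (by rw [hpow]; omega),
        by omega⟩
    push_neg at c10
    by_cases c11 : n ≤ 125 * 5 ^ k - 1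
    · exact ⟨50 * 5 ^ k - 1, memC (k+1) _ (by rw [hpow]; omega) (by rw [hpow]; omega),
        n - (50 * 5 ^ k - 1), memC (k+1) _ (by rw [hpow]; omega) (by rw [hpow]; omega),
        by omega⟩
    push_neg at c11
    · exact ⟨75 * 5 ^ k, memC (k+1) _ (by rw [hpow]; omega) (by rw [hpow]; omega),
        n - 75 * 5 ^ k, memC (k+1) _ (by rw [hpow]; omega) (by rw [hpow]; omega),
        by omega⟩

lemma key_s13 (B : Set ℕ) (hB : B ⊆ myA) (k d : ℕ) (hd : d + 4 ≤ 5 * 5 ^ k)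
    (h : ∃ m ∈ B + B, 45 * 5 ^ k + 1 ≤ m ∧ m ≤ 45 * 5 ^ k + 1 + d) :
    20 * 5 ^ k ∈ B := by
  obtain ⟨m, hm, h1, h2⟩ := h
  rw [Set.mem_add] at hm
  obtain ⟨a, ha, b, hb, hab⟩ := hm
  have := only_rep k (hB ha) (hB hb) (by omega) (by omega)
  rcases this with h | h
  · rwa [h] at ha
  · rwa [h] at hb

theorem stmt_13 :
    ∃ A : Set ℕ, (∀ n : ℕ, 4 ≤ n → ∃ a ∈ A, ∃ b ∈ A, n = a + b) ∧
      ∀ A₁ A₂ : Set ℕ, A₁ ∪ A₂ = A → Disjoint A₁ A₂ →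
        ¬ Syndetic (A₁ + A₁) ∨ ¬ Syndetic (A₂ + A₂) := by
  refine ⟨myA, ?_, ?_⟩
  · intro n hn
    have hpow : n < 5 ^ n := Nat.lt_pow_self (by norm_num)
    exact cover n n hn (by omega)
  · intro A₁ A₂ hunion hdisj
    by_contra hc
    push_neg at hc
    obtain ⟨h1, h2⟩ := hc
    obtain ⟨d₁, hd₁⟩ := h1
    obtain ⟨d₂, hd₂⟩ := h2
    set k := d₁ + d₂ with hk
    have hpk : k < 5 ^ k := Nat.lt_pow_self (by norm_num)
    have hA₁ : A₁ ⊆ myA := by rw [← hunion]; exact Set.subset_union_left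
    have hA₂ : A₂ ⊆ myA := by rw [← hunion]; exact Set.subset_union_right
    have m1 : 20 * 5 ^ k ∈ A₁ := key_s13 A₁ hA₁ k d₁ (by omega) (hd₁ (45 * 5 ^ k + 1))
    have m2 : 20 * 5 ^ k ∈ A₂ := key_s13 A₂ hA₂ k d₂ (by omega) (hd₂ (45 * 5 ^ k + 1))
    exact Set.disjoint_left.mp hdisj m1 m2
end
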